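/- For m ≥ 4, let A be the m×m zero-one matrix where row i for 3 ≤ i ≤ m-1 has a single 1 in column 2, row m has 1s in columns 1 and 2, and rows 1 and 2 are all zeroes. Then for all n ≥ 2, the number of A-colored plane trees with n vertices is 2^{n-1} + m - 3. -/

import Mathlib

/-!
If no color that may occur as a child has a child color itself, every colorable tree is a root
with `n - 1` leaves, and such a tree is determined by the root color `i` and the word of leaf
colors, each chosen among the `#{j | A i j = 1}` allowed ones. So the count is
`∑ i, #{j | A i j = 1} ^ (n - 1)`; for the matrix at hand the row counts are `0, 0, 1, …, 1, 2`.
-/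

inductive CTree (α : Type) : Type
  | node : α → List (CTree α) → CTree α

namespace CTree

def color {α : Type} : CTree α → α
  | node c _ => c

def children {α : Type} : CTree α → List (CTree α)
  | node _ ts => ts

def size {α : Type} : CTree α → ℕ
  | node _ ts => 1 + (ts.attach.map fun t => size t.1).sum
decreasing_by
  have := List.sizeOf_lt_of_mem t.2
  simp only [CTree.node.sizeOf_spec]
  omega

def Valid {α : Type} (A : Matrix α α ℕ) : CTree α → Prop
  | node c ts => ∀ t ∈ ts, A c t.color = 1 ∧ Valid A t

end CTree

noncomputable def colorCount {m : ℕ} (A : Matrix (Fin m) (Fin m) ℕ) (i : Fin m) (n : ℕ) : ℕ :=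
  {t : CTree (Fin m) | t.Valid A ∧ t.size = n ∧ t.color = i}.ncard

noncomputable def totalCount {α : Type} (A : Matrix α α ℕ) (n : ℕ) : ℕ :=
  {t : CTree α | t.Valid A ∧ t.size = n}.ncard

namespace CTree

variable {α : Type}

@[simp]
lemma size_node (c : α) (ts : List (CTree α)) : (node c ts).size = 1 + (ts.map size).sum := by
  rw [size, List.map_attach_eq_pmap, List.pmap_eq_map]

@[simp]
lemma valid_node (A : Matrix α α ℕ) (c : α) (ts : List (CTree α)) :
    (node c ts).Valid A ↔ ∀ t ∈ ts, A c t.color = 1 ∧ t.Valid A := by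
  rw [Valid]

def star {n : ℕ} (c : α) (v : Fin n → α) : CTree α :=
  node c (List.ofFn fun j => node (v j) [])

lemma size_star {n : ℕ} (c : α) (v : Fin n → α) : (star c v).size = n + 1 := by
  simp [star, List.map_ofFn, Function.comp_def, add_comm]

lemma valid_star_iff {A : Matrix α α ℕ} {n : ℕ} {c : α} {v : Fin n → α} :
    (star c v).Valid A ↔ ∀ j, A c (v j) = 1 := by
  simp [star, color]

lemma star_inj {n : ℕ} {c c' : α} {v v' : Fin n → α} :
    star c v = star c' v' ↔ c = c' ∧ v = v' := by
  simp [star, funext_iff]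

lemma eq_node_nil_of_valid {A : Matrix α α ℕ} (hA : ∀ i j k, A i j = 1 → A j k ≠ 1)
    {c : α} {t : CTree α} (hc : A c t.color = 1) (ht : t.Valid A) : t = node t.color [] := by
  obtain ⟨d, _ | ⟨s, ss⟩⟩ := t
  · rfl
  · exact absurd ((valid_node A d _).1 ht s (by simp)).1 (hA c d _ hc)

lemma exists_eq_star {A : Matrix α α ℕ} (hA : ∀ i j k, A i j = 1 → A j k ≠ 1) {n : ℕ}
    {t : CTree α} (ht : t.Valid A) (hs : t.size = n + 1) :
    ∃ (c : α) (v : Fin n → α), t = star c v := by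
  obtain ⟨c, ts⟩ := t
  have hleaf (s : CTree α) (hs : s ∈ ts) : s = node s.color [] :=
    eq_node_nil_of_valid hA ((valid_node A c ts).1 ht s hs).1 ((valid_node A c ts).1 ht s hs).2
  have hlen : ts.length = n := by
    have hsize : ts.map size = ts.map fun _ => 1 :=
      List.map_congr_left fun s hs => by rw [hleaf s hs]; simp
    simpa [hsize, add_comm] using hs
  subst hlen
  refine ⟨c, fun j => (ts.get j).color, ?_⟩
  simp only [star, node.injEq, true_and]
  exact List.ext_get (by simp) fun i _ _ => by simpa using hleaf _ (List.getElem_mem _)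

end CTree

open Finset

theorem totalCount_succ_eq_sum_pow {α : Type} [Fintype α] {A : Matrix α α ℕ}
    (hA : ∀ i j k, A i j = 1 → A j k ≠ 1) (n : ℕ) :
    totalCount A (n + 1) = ∑ i, #{j | A i j = 1} ^ n := by
  classical
  let f : (Σ c : α, Fin n → {j // A c j = 1}) → CTree α := fun p => CTree.star p.1 (p.2 · |>.1)
  have hrange : {t : CTree α | t.Valid A ∧ t.size = n + 1} = Set.range f := by
    ext t
    constructor
    · rintro ⟨ht, hs⟩
      obtain ⟨c, v, rfl⟩ := CTree.exists_eq_star hA ht hs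
      exact ⟨⟨c, fun j => ⟨v j, CTree.valid_star_iff.1 ht j⟩⟩, rfl⟩
    · rintro ⟨⟨c, v⟩, rfl⟩
      exact ⟨CTree.valid_star_iff.2 fun j => (v j).2, CTree.size_star _ _⟩
  have hinj : f.Injective := by
    rintro ⟨c, v⟩ ⟨c', v'⟩ h
    obtain ⟨rfl, hv⟩ := CTree.star_inj.1 h
    exact congrArg (Sigma.mk c) (funext fun j => Subtype.ext (congrFun hv j))
  rw [totalCount, hrange, Set.ncard_range_of_injective hinj, Nat.card_eq_fintype_card,
    Fintype.card_sigma]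
  simp [Fintype.card_subtype]

/-- The matrix `A` of the statement, with colors `1, …, m` shifted to `0, …, m - 1`. -/
def heightOneMatrix (m : ℕ) : Matrix (Fin m) (Fin m) ℕ :=
  Matrix.of fun i j => if i.val = m - 1 then (if j.val ≤ 1 then 1 else 0)
    else if 2 ≤ i.val then (if j.val = 1 then 1 else 0) else 0

section heightOneMatrix

variable {m : ℕ}

lemma heightOneMatrix_eq_one_iff {i j : Fin m} :
    heightOneMatrix m i j = 1 ↔
      i.val = m - 1 ∧ j.val ≤ 1 ∨ i.val ≠ m - 1 ∧ 2 ≤ i.val ∧ j.val = 1 := by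
  simp only [heightOneMatrix, Matrix.of_apply]
  split_ifs <;> simp_all

lemma heightOneMatrix_height (hm : 3 ≤ m) (i j k : Fin m) :
    heightOneMatrix m i j = 1 → heightOneMatrix m j k ≠ 1 := by
  rw [Ne, heightOneMatrix_eq_one_iff, heightOneMatrix_eq_one_iff]
  omega

lemma card_heightOneMatrix_row (hm : 2 ≤ m) (i : Fin m) :
    #{j | heightOneMatrix m i j = 1} =
      if i.val = m - 1 then 2 else if 2 ≤ i.val then 1 else 0 := by
  simp only [heightOneMatrix_eq_one_iff]
  split_ifs with hlast hmid
  · have h2 : #{j : Fin m | j.val < 2} = 2 := by rw [Fin.card_filter_val_lt]; omega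
    simpa [hlast, Nat.lt_succ_iff] using h2
  · rw [card_eq_one]
    refine ⟨⟨1, by omega⟩, ?_⟩
    ext j
    simp [Fin.ext_iff, hlast, hmid]
  · simp [hlast, hmid]

lemma sum_card_heightOneMatrix_row_pow (hm : 3 ≤ m) {k : ℕ} (hk : 1 ≤ k) :
    ∑ i : Fin m, #{j | heightOneMatrix m i j = 1} ^ k = 2 ^ k + m - 3 := by
  simp only [card_heightOneMatrix_row (by omega : 2 ≤ m)]
  obtain ⟨M, rfl⟩ : ∃ M, m = M + 1 := ⟨m - 1, by omega⟩
  have hrow (i : Fin M) :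
      (if (i.castSucc : ℕ) = M + 1 - 1 then 2 else if 2 ≤ (i.castSucc : ℕ) then 1 else 0) ^ k =
        if 2 ≤ i.val then 1 else 0 := by
    rw [Fin.val_castSucc, if_neg (by omega)]
    split_ifs <;> simp; omega
  have hcount : #{i : Fin M | 2 ≤ i.val} = M - 2 := by
    have := card_filter_add_card_filter_not (s := univ) fun i : Fin M => i.val < 2
    simp only [not_lt, Fin.card_filter_val_lt, card_univ, Fintype.card_fin] at this
    omega
  rw [Fin.sum_univ_castSucc, sum_congr rfl fun i _ => hrow i, ← card_filter, hcount]
  simp only [Fin.val_last, Nat.add_sub_cancel, if_true]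
  generalize 2 ^ k = p
  omega

end heightOneMatrix

/-- For `m ≥ 4`, the matrix whose rows `3..m-1` have a single one in column 2, whose row `m`
has ones in columns 1 and 2, and whose rows 1, 2 are zero, has counting sequence
`2^{n-1} + m - 3` for `n ≥ 2`. -/
theorem stmt12 (m : ℕ) (hm : 4 ≤ m) (A : Matrix (Fin m) (Fin m) ℕ)
    (hA : ∀ i j : Fin m,
      A i j = if i.val = m - 1 then (if j.val ≤ 1 then 1 else 0)
        else if 2 ≤ i.val then (if j.val = 1 then 1 else 0) else 0)
    (n : ℕ) (hn : 2 ≤ n) :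
    totalCount A n = 2 ^ (n - 1) + m - 3 := by
  obtain rfl : A = heightOneMatrix m := Matrix.ext hA
  obtain ⟨k, rfl⟩ : ∃ k, n = k + 1 := ⟨n - 1, by omega⟩
  rw [totalCount_succ_eq_sum_pow (heightOneMatrix_height (by omega)), Nat.add_sub_cancel,
    sum_card_heightOneMatrix_row_pow (by omega) (by omega)]
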